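/- arXiv:2206.10105 — 2 statements merged into one kernel-verified Lean document; each statement's English description precedes it below -/
import Mathlib

section
/- Under the Poly(α) voting rule with α > 0, the voting power process (θ_{k,t})_{t≥0} of each bidder k is a strict supermartingale on the event {no one else's stake count changes}: E[θ_{k,t+1} | F_t] = θ_{k,t}·(1 - N_t^{-α} + (N_t+1)^{-α}) ≤ θ_{k,t}, with strict inequality when θ_{k,t} > 0 and α > 0. -/
open Real

/-! The three outcomes of a period (no stake handed out, a stake to another bidder, a stake to
bidder `k`) average to `θ · (1 - N^{-α} + (N+1)^{-α})`, and this factor is below `1` because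
`t ↦ t^{-α}` is strictly decreasing. -/

lemma expected_voting_power_eq {α N : ℝ} (hN : 0 < N) (p : ℝ) :
    (p / N ^ α) * (1 - 1 / N ^ α)
      + (N * p / (N + 1) ^ (1 + α)) * ((1 - p) / N ^ α)
      + ((N * p + 1) / (N + 1) ^ (1 + α)) * (p / N ^ α)
      = (p / N ^ α) * (1 - N ^ (-α) + (N + 1) ^ (-α)) := by
  have hN1 : 0 < N + 1 := by linarith
  have hNα : N ^ α ≠ 0 := (rpow_pos_of_pos hN α).ne'
  have hN1α : (N + 1) ^ α ≠ 0 := (rpow_pos_of_pos hN1 α).ne'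
  rw [rpow_add hN1, rpow_one, rpow_neg hN.le, rpow_neg hN1.le]
  field_simp
  ring

lemma one_sub_rpow_neg_add_rpow_neg_succ_lt_one {α N : ℝ} (hα : 0 < α) (hN : 0 < N) :
    1 - N ^ (-α) + (N + 1) ^ (-α) < 1 := by
  have := rpow_lt_rpow_of_neg hN (lt_add_one N) (neg_lt_zero.mpr hα)
  linarith

theorem stmt_2_general (α N p : ℝ) (hα : 0 < α) (hN : 2 ≤ N) (hp0 : 0 ≤ p) :
    (p / N ^ α) * (1 - 1 / N ^ α)
      + (N * p / (N + 1) ^ (1 + α)) * ((1 - p) / N ^ α)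
      + ((N * p + 1) / (N + 1) ^ (1 + α)) * (p / N ^ α)
      = (p / N ^ α) * (1 - N ^ (-α) + (N + 1) ^ (-α)) ∧
    (p / N ^ α) * (1 - N ^ (-α) + (N + 1) ^ (-α)) ≤ p / N ^ α ∧
    (0 < p / N ^ α →
      (p / N ^ α) * (1 - N ^ (-α) + (N + 1) ^ (-α)) < p / N ^ α) := by
  have hN0 : 0 < N := by linarith
  have hfactor := one_sub_rpow_neg_add_rpow_neg_succ_lt_one hα hN0
  have hθ : 0 ≤ p / N ^ α := div_nonneg hp0 (rpow_nonneg hN0.le α)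
  exact ⟨expected_voting_power_eq hN0 p, mul_le_of_le_one_right hθ hfactor.le,
    fun hθpos => mul_lt_of_lt_one_right hθpos hfactor⟩

/-- Under the Poly(α) voting rule with α > 0, the voting power θ = p/N^α is a strict
supermartingale: its one-step conditional expectation equals
`θ·(1 - N^{-α} + (N+1)^{-α}) ≤ θ`, with strict inequality when `θ > 0`. -/
theorem stmt_2 (α N p : ℝ) (hα : 0 < α) (hN : 2 ≤ N) (hp0 : 0 ≤ p) (hp1 : p ≤ 1) :
    (p / N ^ α) * (1 - 1 / N ^ α)
      + (N * p / (N + 1) ^ (1 + α)) * ((1 - p) / N ^ α)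
      + ((N * p + 1) / (N + 1) ^ (1 + α)) * (p / N ^ α)
      = (p / N ^ α) * (1 - N ^ (-α) + (N + 1) ^ (-α)) ∧
    (p / N ^ α) * (1 - N ^ (-α) + (N + 1) ^ (-α)) ≤ p / N ^ α ∧
    (0 < p / N ^ α →
      (p / N ^ α) * (1 - N ^ (-α) + (N + 1) ^ (-α)) < p / N ^ α) :=
  stmt_2_general α N p hα hN hp0
end

section
/- Define f_α(λ) = (1+α)·λ·log λ − (1+α)·λ + λ^{−α} for λ > 0 and α ≥ 0. Then f_α((1+α)^{1/(1+α)}) < 0 for α > 0, f_α(λ) → +∞ as λ → 0+, and f_α(λ) → +∞ as λ → +∞; consequently f_α has at least one root in (0, (1+α)^{1/(1+α)}) and at least one root in ((1+α)^{1/(1+α)}, ∞). -/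
open Real Filter

/-- Properties of the large-deviation rate function
`f_α(λ) = (1+α)λ log λ − (1+α)λ + λ^{−α}`: it is negative at the growth constant
`(1+α)^{1/(1+α)}`, blows up at 0⁺ and at ∞, and hence has roots on both sides. -/
theorem stmt_4 (α : ℝ) (hα : 0 < α) :
    (fun l : ℝ => (1 + α) * l * Real.log l - (1 + α) * l + l ^ (-α))
        ((1 + α) ^ ((1 : ℝ) / (1 + α))) < 0 ∧
    Tendsto (fun l : ℝ => (1 + α) * l * Real.log l - (1 + α) * l + l ^ (-α))
      (nhdsWithin 0 (Set.Ioi 0)) atTop ∧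
    Tendsto (fun l : ℝ => (1 + α) * l * Real.log l - (1 + α) * l + l ^ (-α))
      atTop atTop ∧
    (∃ l ∈ Set.Ioo (0 : ℝ) ((1 + α) ^ ((1 : ℝ) / (1 + α))),
      (1 + α) * l * Real.log l - (1 + α) * l + l ^ (-α) = 0) ∧
    (∃ l ∈ Set.Ioi ((1 + α) ^ ((1 : ℝ) / (1 + α))),
      (1 + α) * l * Real.log l - (1 + α) * l + l ^ (-α) = 0) := by
  have ht : (0 : ℝ) < 1 + α := by linarith
  have ht1 : (1 : ℝ) < 1 + α := by linarith
  set f : ℝ → ℝ := fun l : ℝ => (1 + α) * l * Real.log l - (1 + α) * l + l ^ (-α) with hfdef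
  set c : ℝ := (1 + α) ^ ((1 : ℝ) / (1 + α)) with hc
  have hcpos : 0 < c := Real.rpow_pos_of_pos ht _
  -- value at c
  have hlogc : Real.log c = (1 / (1 + α)) * Real.log (1 + α) := Real.log_rpow ht _
  have hcpow : c ^ (-α) = c * (1 + α)⁻¹ := by
    rw [hc, ← Real.rpow_mul ht.le,
      show (1 : ℝ) / (1 + α) * (-α) = 1 / (1 + α) + (-1) by field_simp; ring,
      Real.rpow_add ht, Real.rpow_neg_one]
  have hneg : f c < 0 := by
    have hfc : f c = c * (Real.log (1 + α) - (1 + α) + (1 + α)⁻¹) := by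
      simp only [hfdef]
      rw [hlogc, hcpow]
      field_simp
    have hlog : Real.log (1 + α) < (1 + α) - 1 :=
      Real.log_lt_sub_one_of_pos ht (by linarith)
    have hinv : (1 + α)⁻¹ ≤ 1 := by
      rw [inv_le_one_iff₀]; right; linarith
    have : Real.log (1 + α) - (1 + α) + (1 + α)⁻¹ < 0 := by linarith
    rw [hfc]
    exact mul_neg_of_pos_of_neg hcpos this
  -- continuity on Ioi 0
  have hcont : ContinuousOn f (Set.Ioi 0) := by
    apply ContinuousOn.add
    · apply ContinuousOn.sub
      · have : ContinuousOn (fun l : ℝ => (1 + α) * (l * Real.log l)) (Set.Ioi 0) :=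
          (continuous_const.mul Real.continuous_mul_log).continuousOn
        exact this.congr (fun x _ => by ring)
      · exact (continuous_const.mul continuous_id).continuousOn
    · exact continuousOn_id.rpow_const fun x hx => Or.inl (ne_of_gt hx)
  -- tendsto at 0⁺
  have h0 : Tendsto f (nhdsWithin 0 (Set.Ioi 0)) atTop := by
    have h1 : Tendsto (fun l : ℝ => (1 + α) * l * Real.log l - (1 + α) * l)
        (nhdsWithin 0 (Set.Ioi 0)) (nhds 0) := by
      have : Continuous (fun l : ℝ => (1 + α) * (l * Real.log l) - (1 + α) * l) :=
        (continuous_const.mul Real.continuous_mul_log).sub (continuous_const.mul continuous_id)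
      have h := (this.tendsto 0).mono_left (nhdsWithin_le_nhds (s := Set.Ioi 0))
      simp only [mul_zero, zero_mul, Real.log_zero, sub_zero, mul_assoc] at h ⊢
      simpa using h
    have h2 : Tendsto (fun l : ℝ => l ^ (-α)) (nhdsWithin 0 (Set.Ioi 0)) atTop := by
      have hinv : Tendsto (fun l : ℝ => l⁻¹) (nhdsWithin 0 (Set.Ioi 0)) atTop :=
        tendsto_inv_nhdsGT_zero
      have := (tendsto_rpow_atTop hα).comp hinv
      refine this.congr' ?_
      filter_upwards [self_mem_nhdsWithin] with x hx
      rw [Function.comp_apply, ← Real.rpow_neg_one, ← Real.rpow_mul (le_of_lt hx)]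
      norm_num
    simpa using h1.add_atTop h2
  -- tendsto at ∞
  have hinf : Tendsto f atTop atTop := by
    have h1 : Tendsto (fun l : ℝ => (1 + α) * l * Real.log l - (1 + α) * l) atTop atTop := by
      have hmain : Tendsto (fun l : ℝ => l * (Real.log l - 1)) atTop atTop :=
        tendsto_id.atTop_mul_atTop₀ (tendsto_atTop_add_const_right _ _ Real.tendsto_log_atTop)
      have := hmain.const_mul_atTop ht
      refine this.congr fun x => by ring
    have h2 : Tendsto (fun l : ℝ => l ^ (-α)) atTop (nhds 0) := tendsto_rpow_neg_atTop hα
    exact h1.atTop_add h2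
  refine ⟨hneg, h0, hinf, ?_, ?_⟩
  · -- root in (0, c)
    have hev : ∀ᶠ l in nhdsWithin 0 (Set.Ioi 0), 0 < f l ∧ 0 < l ∧ l < c := by
      filter_upwards [h0.eventually_gt_atTop 0, self_mem_nhdsWithin,
        eventually_nhdsWithin_of_eventually_nhds
          (eventually_lt_nhds hcpos)] with x h1 h2 h3
      exact ⟨h1, h2, h3⟩
    obtain ⟨a, hfa, ha0, hac⟩ := hev.exists
    have hsub : Set.Icc a c ⊆ Set.Ioi 0 := fun x hx => lt_of_lt_of_le ha0 hx.1
    have := intermediate_value_Ioo' (le_of_lt hac) (hcont.mono hsub)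
      (Set.mem_Ioo.mpr ⟨hneg, hfa⟩)
    obtain ⟨l, hl, hfl⟩ := this
    exact ⟨l, ⟨lt_trans ha0 hl.1, hl.2⟩, hfl⟩
  · -- root in (c, ∞)
    have hev : ∀ᶠ l in atTop, 0 < f l ∧ c < l := by
      filter_upwards [hinf.eventually_gt_atTop 0, eventually_gt_atTop c] with x h1 h2
      exact ⟨h1, h2⟩
    obtain ⟨b, hfb, hcb⟩ := hev.exists
    have hsub : Set.Icc c b ⊆ Set.Ioi 0 := fun x hx => lt_of_lt_of_le hcpos hx.1
    have := intermediate_value_Ioo (le_of_lt hcb) (hcont.mono hsub)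
      (Set.mem_Ioo.mpr ⟨hneg, hfb⟩)
    obtain ⟨l, hl, hfl⟩ := this
    exact ⟨l, hl.1, hfl⟩
end
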